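/- Let Q be a probability transition kernel on a measurable space 𝒳 with invariant probability measure π, and let g ∈ L^2(π) be an ℝ^d-valued function such that ∫ |T_n(g, Q)|² dπ ≤ C(g,Q)·n for some constant C(g,Q) < ∞ and all n ≥ 1. Then for any β > 1 there is a constant Γ, depending only on β, such that π({x : max_{1 ≤ j ≤ n} |T_j(g, Q)(x)| > λ}) ≤ Γ C(g,Q) n^β / λ² for all λ > 0 and all n ≥ 1. -/

import Mathlib

/-!
Split `[1, n]` dyadically: every `j ≤ n` is reached from `0` by at most `⌊log₂ n⌋ + 1` aligned
blocks `(m 2ᵏ, (m + 1) 2ᵏ]`, so if `|T_j| > λ` one of these blocks carries an increment larger than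
`λ / (⌊log₂ n⌋ + 1)`. The increment over such a block is `Q^{m 2ᵏ} T_{2ᵏ}(g, Q)`, and `Q` is an
`L²(π)`-contraction because `π` is invariant, so its second moment is at most `C 2ᵏ`. Chebyshev and
a union bound over the `n / 2ᵏ` blocks of each of the `⌊log₂ n⌋ + 1` levels give the bound
`(⌊log₂ n⌋ + 1)³ C n / λ²`, and `(⌊log₂ n⌋ + 1)³ = O(n^(β - 1))`.
-/

open MeasureTheory ProbabilityTheory Filter
open scoped ENNReal NNReal

noncomputable section

/-- The Markov transition operator: `Qh(x) = ∫ h(y) Q(x; dy)`. -/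
def kerOp {𝒳 : Type*} [MeasurableSpace 𝒳] {E : Type*} [NormedAddCommGroup E]
    [NormedSpace ℝ E] (Q : Kernel 𝒳 𝒳) (h : 𝒳 → E) : 𝒳 → E :=
  fun x => ∫ y, h y ∂(Q x)

/-- `T_n(g, Q) = ∑_{k=0}^{n-1} Q^k g`. -/
def Tres {𝒳 : Type*} [MeasurableSpace 𝒳] {E : Type*} [NormedAddCommGroup E]
    [NormedSpace ℝ E] (Q : Kernel 𝒳 𝒳) (g : 𝒳 → E) (n : ℕ) : 𝒳 → E :=
  fun x => ∑ k ∈ Finset.range n, (kerOp Q)^[k] g x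

lemma enorm_integral_rpow_le_lintegral {α E : Type*} [MeasurableSpace α] [NormedAddCommGroup E]
    [NormedSpace ℝ E] {μ : Measure α} [IsProbabilityMeasure μ] {h : α → E}
    (hh : AEStronglyMeasurable h μ) {q : ℝ} (hq : 1 ≤ q) :
    ‖∫ y, h y ∂μ‖ₑ ^ q ≤ ∫⁻ y, ‖h y‖ₑ ^ q ∂μ := by
  calc ‖∫ y, h y ∂μ‖ₑ ^ q ≤ eLpNorm' h 1 μ ^ q := by
        gcongr
        simpa [eLpNorm'_eq_lintegral_enorm] using enorm_integral_le_lintegral_enorm h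
    _ ≤ eLpNorm' h q μ ^ q := by
        gcongr
        exact eLpNorm'_le_eLpNorm'_of_exponent_le one_pos hq μ hh
    _ = ∫⁻ y, ‖h y‖ₑ ^ q ∂μ := (lintegral_rpow_enorm_eq_rpow_eLpNorm' (by linarith)).symm

lemma MeasureTheory.MemLp.ofReal_integral_norm_sq_eq {α E : Type*} [MeasurableSpace α]
    [NormedAddCommGroup E] {μ : Measure α} {f : α → E} (hf : MemLp f 2 μ) :
    ENNReal.ofReal (∫ x, ‖f x‖ ^ 2 ∂μ) = eLpNorm f 2 μ ^ 2 := by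
  rw [hf.eLpNorm_eq_integral_rpow_norm two_ne_zero ENNReal.ofNat_ne_top, ← ENNReal.ofReal_pow
    (by positivity)]
  simp only [ENNReal.toReal_ofNat, Real.rpow_two]
  rw [← one_div, ← Real.sqrt_eq_rpow, Real.sq_sqrt (integral_nonneg fun x => by positivity)]

lemma norm_le_of_dyadic_increments_le {E : Type*} [SeminormedAddCommGroup E] (v : ℕ → E)
    (hv0 : v 0 = 0) {δ : ℝ} (hδ : 0 ≤ δ) {n j K : ℕ} (hjn : j ≤ n) (hjK : j < 2 ^ (K + 1))
    (hblock : ∀ k ≤ K, ∀ m : ℕ, (m + 1) * 2 ^ k ≤ n →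
      ‖v ((m + 1) * 2 ^ k) - v (m * 2 ^ k)‖ ≤ δ) :
    ‖v j‖ ≤ (K + 1) * δ := by
  set p : ℕ → ℕ := fun k => 2 ^ k * (j / 2 ^ k) with hp
  have htel : ∑ k ∈ Finset.range (K + 1), (v (p k) - v (p (k + 1))) = v j := by
    rw [Finset.sum_range_sub' fun k => v (p k)]
    simp [hp, Nat.div_eq_of_lt hjK, hv0]
  have hterm : ∀ k ∈ Finset.range (K + 1), ‖v (p k) - v (p (k + 1))‖ ≤ δ := by
    intro k hk
    have hsplit : j / 2 ^ k = 2 * (j / 2 ^ (k + 1)) + j / 2 ^ k % 2 := by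
      rw [pow_succ, ← Nat.div_div_eq_div_mul]; omega
    have hpk_le : p k ≤ n := (Nat.mul_div_le j (2 ^ k)).trans hjn
    have hpk1 : p (k + 1) = 2 * (j / 2 ^ (k + 1)) * 2 ^ k := by simp only [hp]; ring
    rcases Nat.mod_two_eq_zero_or_one (j / 2 ^ k) with hr | hr
    · have : p k = p (k + 1) := by rw [hpk1]; simp only [hp]; rw [hsplit, hr]; ring
      rw [this, sub_self, norm_zero]
      exact hδ
    · have hpk : p k = (2 * (j / 2 ^ (k + 1)) + 1) * 2 ^ k := by
        simp only [hp]; rw [hsplit, hr]; ring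
      rw [hpk, hpk1]
      exact hblock k (Finset.mem_range_succ_iff.1 hk) _ (hpk ▸ hpk_le)
  calc ‖v j‖ ≤ ∑ k ∈ Finset.range (K + 1), ‖v (p k) - v (p (k + 1))‖ := htel ▸ norm_sum_le _ _
    _ ≤ ∑ _k ∈ Finset.range (K + 1), δ := Finset.sum_le_sum hterm
    _ = (K + 1) * δ := by simp

section MaximalInequality

variable {α E : Type*} [MeasurableSpace α] [NormedAddCommGroup E] {μ : Measure α}

lemma measure_norm_gt_le_eLpNorm_sq_div {f : α → E} (hf : AEStronglyMeasurable f μ) {δ : ℝ}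
    (hδ : 0 < δ) : μ {x | δ < ‖f x‖} ≤ eLpNorm f 2 μ ^ 2 / ENNReal.ofReal δ ^ 2 :=
  calc μ {x | δ < ‖f x‖} ≤ μ {x | ENNReal.ofReal δ ≤ ‖f x‖ₑ} := measure_mono fun x hx => by
        simpa only [Set.mem_ofPred_eq, ← ofReal_norm] using ENNReal.ofReal_le_ofReal hx.le
    _ ≤ (ENNReal.ofReal δ)⁻¹ ^ (2 : ℝ≥0∞).toReal * eLpNorm f 2 μ ^ (2 : ℝ≥0∞).toReal :=
        meas_ge_le_mul_pow_eLpNorm_enorm μ two_ne_zero ENNReal.ofNat_ne_top hf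
          (by simpa using hδ) (by simp)
    _ = eLpNorm f 2 μ ^ 2 / ENNReal.ofReal δ ^ 2 := by
        simp [div_eq_mul_inv, mul_comm, ENNReal.inv_pow]

theorem measure_exists_norm_gt_le {S : ℕ → α → E} (hS0 : S 0 = 0)
    (hS : ∀ j, AEStronglyMeasurable (S j) μ) {C : ℝ} (hC : 0 ≤ C)
    (hinc : ∀ i m, eLpNorm (fun x => S (i + m) x - S i x) 2 μ ^ 2 ≤ ENNReal.ofReal (C * m))
    (n : ℕ) {lam : ℝ} (hlam : 0 < lam) :
    μ {x | ∃ j, 1 ≤ j ∧ j ≤ n ∧ lam < ‖S j x‖} ≤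
      ENNReal.ofReal (((Nat.log 2 n : ℝ) + 1) ^ 3 * C * n / lam ^ 2) := by
  set K := Nat.log 2 n
  set δ := lam / (K + 1)
  have hδ : 0 < δ := by positivity
  set B : ℕ → ℕ → Set α := fun k m => {x | δ < ‖S ((m + 1) * 2 ^ k) x - S (m * 2 ^ k) x‖}
  have hcover : {x | ∃ j, 1 ≤ j ∧ j ≤ n ∧ lam < ‖S j x‖} ⊆
      ⋃ k ∈ Finset.range (K + 1), ⋃ m ∈ Finset.range (n / 2 ^ k), B k m := by
    rintro x ⟨j, -, hjn, hlt⟩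
    by_contra hx
    simp only [Set.mem_iUnion, Finset.mem_range, exists_prop, not_exists, not_and] at hx
    refine hlt.not_ge ?_
    calc ‖S j x‖ ≤ (K + 1) * δ :=
          norm_le_of_dyadic_increments_le (fun i => S i x) (by simp [hS0]) hδ.le hjn
            (hjn.trans_lt (Nat.lt_pow_succ_log_self one_lt_two n)) fun k hk m hm =>
            not_lt.1 (hx k (by omega) m
              (Nat.lt_of_succ_le ((Nat.le_div_iff_mul_le (by positivity)).2 hm)))
      _ = lam := by simp only [δ]; field_simp
  have hblock : ∀ k m, μ (B k m) ≤ ENNReal.ofReal (C * 2 ^ k / δ ^ 2) := by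
    intro k m
    have hinc' := hinc (m * 2 ^ k) (2 ^ k)
    rw [show m * 2 ^ k + 2 ^ k = (m + 1) * 2 ^ k by ring] at hinc'
    calc μ (B k m) ≤ _ / ENNReal.ofReal δ ^ 2 :=
          measure_norm_gt_le_eLpNorm_sq_div ((hS _).sub (hS _)) hδ
      _ ≤ ENNReal.ofReal (C * 2 ^ k) / ENNReal.ofReal δ ^ 2 := by
          gcongr; exact_mod_cast hinc'
      _ = ENNReal.ofReal (C * 2 ^ k / δ ^ 2) := by
          rw [← ENNReal.ofReal_pow hδ.le, ENNReal.ofReal_div_of_pos (by positivity)]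
  have hlevel :
      ∀ k, ∑ m ∈ Finset.range (n / 2 ^ k), μ (B k m) ≤ ENNReal.ofReal (n * C / δ ^ 2) := by
    intro k
    have hfloor : ((n / 2 ^ k : ℕ) : ℝ) * 2 ^ k ≤ n := by
      exact_mod_cast Nat.div_mul_le_self n (2 ^ k)
    calc ∑ m ∈ Finset.range (n / 2 ^ k), μ (B k m)
        ≤ ∑ m ∈ Finset.range (n / 2 ^ k), ENNReal.ofReal (C * 2 ^ k / δ ^ 2) :=
          Finset.sum_le_sum fun m _ => hblock k m
      _ = ENNReal.ofReal ((n / 2 ^ k : ℕ) * 2 ^ k * C / δ ^ 2) := by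
          rw [Finset.sum_const, Finset.card_range, nsmul_eq_mul, ← ENNReal.ofReal_natCast,
            ← ENNReal.ofReal_mul (by positivity)]
          ring_nf
      _ ≤ ENNReal.ofReal (n * C / δ ^ 2) := by
          gcongr
  calc μ {x | ∃ j, 1 ≤ j ∧ j ≤ n ∧ lam < ‖S j x‖}
      ≤ ∑ k ∈ Finset.range (K + 1), ∑ m ∈ Finset.range (n / 2 ^ k), μ (B k m) :=
        (measure_mono hcover).trans ((measure_biUnion_finset_le _ _).trans
          (Finset.sum_le_sum fun k _ => measure_biUnion_finset_le _ _))
    _ ≤ ∑ _k ∈ Finset.range (K + 1), ENNReal.ofReal (n * C / δ ^ 2) :=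
        Finset.sum_le_sum fun k _ => hlevel k
    _ = ENNReal.ofReal (((K : ℝ) + 1) ^ 3 * C * n / lam ^ 2) := by
        rw [Finset.sum_const, Finset.card_range, nsmul_eq_mul, ← ENNReal.ofReal_natCast,
          ← ENNReal.ofReal_mul (by positivity)]
        congr 1
        simp only [δ]
        push_cast
        field_simp

end MaximalInequality

lemma exists_nat_log_add_one_pow_le_mul_rpow {ε : ℝ} (hε : 0 < ε) (r : ℕ) :
    ∃ Γ : ℝ, ∀ n : ℕ, 1 ≤ n → ((Nat.log 2 n : ℝ) + 1) ^ r ≤ Γ * (n : ℝ) ^ ε := by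
  set s := ε / (r + 1)
  have hs : 0 < s := by positivity
  refine ⟨(1 / (s * Real.log 2) + 1) ^ r, fun n hn => ?_⟩
  have hn1 : (1 : ℝ) ≤ n := by exact_mod_cast hn
  have hns : 1 ≤ (n : ℝ) ^ s := Real.one_le_rpow hn1 hs.le
  have hlog : (Nat.log 2 n : ℝ) + 1 ≤ (1 / (s * Real.log 2) + 1) * (n : ℝ) ^ s := by
    have hL : (Nat.log 2 n : ℝ) ≤ Real.log n / Real.log 2 := by
      simpa [Real.logb] using Real.natLog_le_logb n 2
    have hlog_le := Real.log_le_rpow_div (Nat.cast_nonneg n) hs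
    calc (Nat.log 2 n : ℝ) + 1 ≤ (n : ℝ) ^ s / s / Real.log 2 + (n : ℝ) ^ s := by
          gcongr
          exact hL.trans (by gcongr)
      _ = (1 / (s * Real.log 2) + 1) * (n : ℝ) ^ s := by field_simp
  have hsr : s * r ≤ ε := by
    rw [div_mul_eq_mul_div, div_le_iff₀ (by positivity)]
    nlinarith
  calc ((Nat.log 2 n : ℝ) + 1) ^ r ≤ ((1 / (s * Real.log 2) + 1) * (n : ℝ) ^ s) ^ r := by
        gcongr
    _ = (1 / (s * Real.log 2) + 1) ^ r * (n : ℝ) ^ (s * r) := by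
        rw [mul_pow, ← Real.rpow_natCast ((n : ℝ) ^ s) r, ← Real.rpow_mul (by positivity)]
    _ ≤ (1 / (s * Real.log 2) + 1) ^ r * (n : ℝ) ^ ε := by
        gcongr

section MarkovOperator

variable {𝒳 E : Type*} [MeasurableSpace 𝒳] [NormedAddCommGroup E] [NormedSpace ℝ E]
  {Q : Kernel 𝒳 𝒳} {π : Measure 𝒳}

lemma stronglyMeasurable_kerOp {h : 𝒳 → E} (hh : StronglyMeasurable h) :
    StronglyMeasurable (kerOp Q h) :=
  hh.integral_kernel

lemma stronglyMeasurable_iterate_kerOp {h : 𝒳 → E} (hh : StronglyMeasurable h) (i : ℕ) :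
    StronglyMeasurable ((kerOp Q)^[i] h) := by
  induction i with
  | zero => exact hh
  | succ i ih => rw [Function.iterate_succ_apply']; exact stronglyMeasurable_kerOp ih

lemma stronglyMeasurable_Tres {g : 𝒳 → E} (hg : StronglyMeasurable g) (n : ℕ) :
    StronglyMeasurable (Tres Q g n) :=
  Finset.stronglyMeasurable_fun_sum _ fun k _ => stronglyMeasurable_iterate_kerOp hg k

lemma kerOp_congr_ae (hinv : Q.Invariant π) {f h : 𝒳 → E} (hfh : f =ᵐ[π] h) :
    kerOp Q f =ᵐ[π] kerOp Q h := by
  have hfh' : ∀ᵐ x ∂π, f =ᵐ[Q x] h :=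
    Measure.ae_ae_of_ae_comp (by rwa [show Q ∘ₘ π = π from hinv])
  filter_upwards [hfh'] with x hx using integral_congr_ae hx

lemma iterate_kerOp_congr_ae (hinv : Q.Invariant π) {f h : 𝒳 → E} (hfh : f =ᵐ[π] h) (i : ℕ) :
    (kerOp Q)^[i] f =ᵐ[π] (kerOp Q)^[i] h := by
  induction i with
  | zero => exact hfh
  | succ i ih =>
    simp only [Function.iterate_succ_apply']
    exact kerOp_congr_ae hinv ih

-- `kerOp Q h x` is the junk value `0` wherever `h` fails to be `Q x`-integrable, so linearity
-- only holds `π`-a.e.; invariance turns `π`-integrability into `Q x`-integrability for a.e. `x`.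
lemma kerOp_finset_sum_ae {ι : Type*} (hinv : Q.Invariant π) (s : Finset ι) {F : ι → 𝒳 → E}
    (hF : ∀ j ∈ s, Integrable (F j) π) :
    kerOp Q (fun x => ∑ j ∈ s, F j x) =ᵐ[π] fun x => ∑ j ∈ s, kerOp Q (F j) x := by
  have hF' : ∀ᵐ x ∂π, ∀ j ∈ s, Integrable (F j) (Q x) := by
    rw [eventually_all_finset]
    exact fun j hj => Measure.ae_integrable_of_integrable_comp
      (by rw [show Q ∘ₘ π = π from hinv]; exact hF j hj)
  filter_upwards [hF'] with x hx using integral_finsetSum s hx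

@[simp]
lemma Tres_zero (g : 𝒳 → E) : Tres Q g 0 = 0 := by
  funext x
  simp [Tres]

lemma Tres_add_sub (g : 𝒳 → E) (i n : ℕ) :
    (fun x => Tres Q g (i + n) x - Tres Q g i x) = Tres Q ((kerOp Q)^[i] g) n := by
  funext x
  simp only [Tres, Finset.sum_range_add, add_sub_cancel_left, ← Function.iterate_add_apply,
    add_comm]

variable [IsMarkovKernel Q]

lemma lintegral_enorm_kerOp_rpow_le (hinv : Q.Invariant π) {h : 𝒳 → E}
    (hh : StronglyMeasurable h) {q : ℝ} (hq : 1 ≤ q) :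
    ∫⁻ x, ‖kerOp Q h x‖ₑ ^ q ∂π ≤ ∫⁻ x, ‖h x‖ₑ ^ q ∂π :=
  calc ∫⁻ x, ‖kerOp Q h x‖ₑ ^ q ∂π ≤ ∫⁻ x, ∫⁻ y, ‖h y‖ₑ ^ q ∂(Q x) ∂π :=
        lintegral_mono fun x => enorm_integral_rpow_le_lintegral hh.aestronglyMeasurable hq
    _ = ∫⁻ y, ‖h y‖ₑ ^ q ∂(π.bind Q) :=
        (Measure.lintegral_bind Q.aemeasurable (hh.enorm.pow_const q).aemeasurable).symm
    _ = ∫⁻ x, ‖h x‖ₑ ^ q ∂π := by rw [hinv]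

lemma eLpNorm_kerOp_le (hinv : Q.Invariant π) {h : 𝒳 → E}
    (hh : StronglyMeasurable h) {p : ℝ≥0∞} (hp : 1 ≤ p) (hp_top : p ≠ ∞) :
    eLpNorm (kerOp Q h) p π ≤ eLpNorm h p π := by
  have hp0 : p ≠ 0 := (zero_lt_one.trans_le hp).ne'
  rw [eLpNorm_eq_lintegral_rpow_enorm_toReal hp0 hp_top,
    eLpNorm_eq_lintegral_rpow_enorm_toReal hp0 hp_top]
  gcongr ?_ ^ _
  exact lintegral_enorm_kerOp_rpow_le hinv hh (by simpa using ENNReal.toReal_mono hp_top hp)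

lemma eLpNorm_iterate_kerOp_le (hinv : Q.Invariant π) {h : 𝒳 → E}
    (hh : StronglyMeasurable h) {p : ℝ≥0∞} (hp : 1 ≤ p) (hp_top : p ≠ ∞) (i : ℕ) :
    eLpNorm ((kerOp Q)^[i] h) p π ≤ eLpNorm h p π := by
  induction i with
  | zero => rfl
  | succ i ih =>
    rw [Function.iterate_succ_apply']
    exact (eLpNorm_kerOp_le hinv (stronglyMeasurable_iterate_kerOp hh i) hp hp_top).trans ih

lemma memLp_iterate_kerOp (hinv : Q.Invariant π) {h : 𝒳 → E}
    (hh : StronglyMeasurable h) {p : ℝ≥0∞} (hp : 1 ≤ p) (hp_top : p ≠ ∞) (hhp : MemLp h p π)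
    (i : ℕ) : MemLp ((kerOp Q)^[i] h) p π :=
  ⟨(stronglyMeasurable_iterate_kerOp hh i).aestronglyMeasurable,
    (eLpNorm_iterate_kerOp_le hinv hh hp hp_top i).trans_lt hhp.2⟩

lemma integrable_iterate_kerOp (hinv : Q.Invariant π) {h : 𝒳 → E} (hh : StronglyMeasurable h)
    (hh1 : Integrable h π) (i : ℕ) : Integrable ((kerOp Q)^[i] h) π :=
  memLp_one_iff_integrable.1
    (memLp_iterate_kerOp hinv hh le_rfl ENNReal.one_ne_top (memLp_one_iff_integrable.2 hh1) i)

lemma memLp_Tres (hinv : Q.Invariant π) {g : 𝒳 → E}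
    (hg : StronglyMeasurable g) {p : ℝ≥0∞} (hp : 1 ≤ p) (hp_top : p ≠ ∞) (hgp : MemLp g p π)
    (n : ℕ) : MemLp (Tres Q g n) p π :=
  memLp_finsetSum _ fun k _ => memLp_iterate_kerOp hinv hg hp hp_top hgp k

lemma kerOp_Tres_ae (hinv : Q.Invariant π) {g : 𝒳 → E} (hg : StronglyMeasurable g)
    (hg1 : Integrable g π) (n : ℕ) :
    kerOp Q (Tres Q g n) =ᵐ[π] Tres Q (kerOp Q g) n := by
  filter_upwards [kerOp_finset_sum_ae hinv (Finset.range n)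
    fun k _ => integrable_iterate_kerOp hinv hg hg1 k] with x hx
  refine hx.trans (Finset.sum_congr rfl fun k _ => ?_)
  rw [← Function.iterate_succ_apply' (kerOp Q) k g, Function.iterate_succ_apply]

lemma iterate_kerOp_Tres_ae (hinv : Q.Invariant π) {g : 𝒳 → E} (hg : StronglyMeasurable g)
    (hg1 : Integrable g π) (n i : ℕ) :
    (kerOp Q)^[i] (Tres Q g n) =ᵐ[π] Tres Q ((kerOp Q)^[i] g) n := by
  induction i generalizing g with
  | zero => rfl
  | succ i ih =>
    rw [Function.iterate_succ_apply, Function.iterate_succ_apply]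
    exact (iterate_kerOp_congr_ae hinv (kerOp_Tres_ae hinv hg hg1 n) i).trans
      (ih (stronglyMeasurable_kerOp hg) (integrable_iterate_kerOp hinv hg hg1 1))

lemma eLpNorm_Tres_add_sub_le (hinv : Q.Invariant π) {g : 𝒳 → E} (hg : StronglyMeasurable g)
    (hg1 : Integrable g π) {p : ℝ≥0∞} (hp : 1 ≤ p) (hp_top : p ≠ ∞) (i n : ℕ) :
    eLpNorm (fun x => Tres Q g (i + n) x - Tres Q g i x) p π ≤ eLpNorm (Tres Q g n) p π := by
  rw [Tres_add_sub, ← eLpNorm_congr_ae (iterate_kerOp_Tres_ae hinv hg hg1 n i)]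
  exact eLpNorm_iterate_kerOp_le hinv (stronglyMeasurable_Tres hg n) hp hp_top i

end MarkovOperator

/-- Corollary to the maximal inequality: for every `β > 1` there is a
constant `Γ` depending only on `β` such that, whenever `∫ |T_n(g,Q)|² dπ ≤ C n` for all
`n ≥ 1`, one has `π(max_{1 ≤ j ≤ n} |T_j(g,Q)| > λ) ≤ Γ C n^β / λ²` for all `λ > 0`, `n ≥ 1`. -/
theorem stmt1 (β : ℝ) (hβ : 1 < β) :
    ∃ Γ : ℝ, ∀ (𝒳 : Type*) (_ : MeasurableSpace 𝒳) (d : ℕ)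
      (Q : Kernel 𝒳 𝒳), IsMarkovKernel Q →
      ∀ (π : Measure 𝒳), IsProbabilityMeasure π → Kernel.Invariant Q π →
      ∀ (g : 𝒳 → EuclideanSpace ℝ (Fin d)), StronglyMeasurable g → MemLp g 2 π →
      ∀ C : ℝ, (∀ n : ℕ, 1 ≤ n → ∫ x, ‖Tres Q g n x‖ ^ 2 ∂π ≤ C * n) →
      ∀ n : ℕ, 1 ≤ n → ∀ lam : ℝ, 0 < lam →
      π {x | ∃ j, 1 ≤ j ∧ j ≤ n ∧ lam < ‖Tres Q g j x‖} ≤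
        ENNReal.ofReal (Γ * C * (n : ℝ) ^ β / lam ^ 2) := by
  obtain ⟨Γ, hΓ⟩ := exists_nat_log_add_one_pow_le_mul_rpow (sub_pos.2 hβ) 3
  refine ⟨Γ, fun 𝒳 _ d Q _ π _ hinv g hg hg2 C hC n hn lam hlam => ?_⟩
  have hmom : ∀ m : ℕ, eLpNorm (Tres Q g m) 2 π ^ 2 ≤ ENNReal.ofReal (C * m) := by
    rintro (_ | m)
    · simp
    · rw [← (memLp_Tres hinv hg one_le_two ENNReal.ofNat_ne_top hg2 _).ofReal_integral_norm_sq_eq]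
      exact ENNReal.ofReal_le_ofReal (hC _ m.succ_pos)
  have hC0 : 0 ≤ C := by
    simpa using (integral_nonneg fun x => by positivity).trans (hC 1 le_rfl)
  have hinc (i m : ℕ) :
      eLpNorm (fun x => Tres Q g (i + m) x - Tres Q g i x) 2 π ^ 2 ≤ ENNReal.ofReal (C * m) :=
    (pow_le_pow_left' (eLpNorm_Tres_add_sub_le hinv hg (hg2.integrable one_le_two) one_le_two
      ENNReal.ofNat_ne_top i m) 2).trans (hmom m)
  calc π {x | ∃ j, 1 ≤ j ∧ j ≤ n ∧ lam < ‖Tres Q g j x‖}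
      ≤ ENNReal.ofReal (((Nat.log 2 n : ℝ) + 1) ^ 3 * C * n / lam ^ 2) :=
        measure_exists_norm_gt_le (Tres_zero g)
          (fun j => (stronglyMeasurable_Tres hg j).aestronglyMeasurable) hC0 hinc n hlam
    _ ≤ ENNReal.ofReal (Γ * C * (n : ℝ) ^ β / lam ^ 2) := by
        have hn0 : (0 : ℝ) < n := by exact_mod_cast hn
        gcongr ENNReal.ofReal (?_ / _)
        calc ((Nat.log 2 n : ℝ) + 1) ^ 3 * C * n ≤ Γ * (n : ℝ) ^ (β - 1) * C * n := by
              gcongr; exact hΓ n hn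
          _ = Γ * C * ((n : ℝ) ^ (β - 1) * n) := by ring
          _ = Γ * C * (n : ℝ) ^ β := by rw [← Real.rpow_add_one hn0.ne', sub_add_cancel]
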